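/- Let L be an L-class in a finite semigroup S such that some H-class contained in L is a group, and let a, b ∈ L. Then ab ∈ L if and only if b lies in an H-class of L that is a group. -/

import Mathlib

section Green

variable {S : Type*} [Semigroup S]

/-- Green's preorder `≤_L`: `a = c * b` for some `c ∈ S¹`. -/
def leL (a b : S) : Prop := a = b ∨ ∃ c, a = c * b

/-- Green's preorder `≤_R`: `a = b * c` for some `c ∈ S¹`. -/
def leR (a b : S) : Prop := a = b ∨ ∃ c, a = b * c

/-- Green's preorder `≤_J`: `a = c * b * c'` for some `c, c' ∈ S¹`. -/
def leJ (a b : S) : Prop :=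
  a = b ∨ (∃ c, a = c * b) ∨ (∃ c, a = b * c) ∨ (∃ c c', a = c * b * c')

/-- Green's relation `L`. -/
def eqL (a b : S) : Prop := leL a b ∧ leL b a

/-- Green's relation `R`. -/
def eqR (a b : S) : Prop := leR a b ∧ leR b a

/-- Green's relation `H = L ∩ R`. -/
def eqH (a b : S) : Prop := eqL a b ∧ eqR a b

/-- Green's relation `D = L ∘ R`. -/
def eqD (a b : S) : Prop := ∃ c, eqL a c ∧ eqR c b

/-- Green's relation `J`. -/
def eqJ (a b : S) : Prop := leJ a b ∧ leJ b a

/-- `H` is an `H`-class of `S`. -/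
def IsHClass (H : Set S) : Prop := ∃ a, H = {b | eqH a b}

/-- `L` is an `L`-class of `S`. -/
def IsLClass (L : Set S) : Prop := ∃ a, L = {b | eqL a b}

/-- `D` is a `D`-class of `S`. -/
def IsDClass (D : Set S) : Prop := ∃ a, D = {b | eqD a b}

/-- An `H`-class is a group if it is closed under the product and forms a
group with the induced operation. -/
def IsGroupHClass (H : Set S) : Prop :=
  (∀ a ∈ H, ∀ b ∈ H, a * b ∈ H) ∧
  ∃ e ∈ H, e * e = e ∧
    ∀ a ∈ H, e * a = a ∧ a * e = a ∧ ∃ b ∈ H, a * b = e ∧ b * a = e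

/-- A regular `D`-class: a `D`-class containing an idempotent. -/
def IsRegularDClass (D : Set S) : Prop := IsDClass D ∧ ∃ e ∈ D, e * e = e

end Green

/-! If `a * b` stays in the `L`-class of `b`, then `b ≤_L a b ≤_L b²`, i.e. `b = m b²` for some
`m ∈ S¹`. Iterating gives `b = mᵏ bᵏ⁺¹`; taking `mᵏ` idempotent (finiteness) forces `mᵏ b = b`,
hence `b = bᵏ⁺¹`, so `bᵏ` is an idempotent `H`-equivalent to `b`, and the `H`-class of an
idempotent is a group. Conversely, if `e` is the identity of the group `H`-class of `b`, then
`e ≤_L a` gives `b = e b ≤_L a b`. -/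

theorem exists_isIdempotentElem_pow {M : Type*} [Monoid M] [Finite M] (x : M) :
    ∃ n, n ≠ 0 ∧ IsIdempotentElem (x ^ n) := by
  obtain ⟨i, j, hne, hij⟩ := Finite.exists_ne_map_eq_of_infinite (x ^ · : ℕ → M)
  wlog hlt : i < j generalizing i j
  · exact this j i hne.symm hij.symm (hne.lt_or_gt.resolve_left hlt)
  obtain ⟨p, rfl⟩ := Nat.exists_eq_add_of_lt hlt
  have hper : ∀ k, x ^ (i + k * (p + 1)) = x ^ i := by
    intro k
    induction k with
    | zero => simp
    | succ k ih => rw [add_mul, one_mul, ← add_assoc, pow_add, ih, ← pow_add, ← add_assoc, ← hij]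
  set q := (i + 1) * (p + 1) with hq
  have hiq : i < q := by rw [hq]; nlinarith
  refine ⟨q, by positivity, ?_⟩
  calc x ^ q * x ^ q = x ^ (q - i) * x ^ (i + (i + 1) * (p + 1)) := by
        rw [← pow_add, ← pow_add]; congr 1; omega
    _ = x ^ q := by rw [hper, ← pow_add, Nat.sub_add_cancel hiq.le]

theorem exists_pow_add_two_eq_of_eq_mul_mul {M : Type*} [Monoid M] [Finite M] {b m : M}
    (h : b = m * (b * b)) : ∃ n, b ^ (n + 2) = b := by
  have hiter : ∀ k, b = m ^ k * b ^ (k + 1) := by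
    intro k
    induction k with
    | zero => simp
    | succ k ih =>
      calc b = m ^ k * (m * (b * b)) * b ^ k := by rw [← h, mul_assoc, ← pow_succ', ← ih]
        _ = m ^ (k + 1) * b ^ (k + 1 + 1) := by
          rw [pow_succ m, pow_succ' b (k + 1), pow_succ' b k]; simp only [mul_assoc]
  obtain ⟨N, hN, hidem⟩ := exists_isIdempotentElem_pow m
  have hfix : m ^ N * b = b := by
    conv_lhs => rw [hiter N]
    rw [← mul_assoc, hidem.eq, ← hiter N]
  obtain ⟨n, rfl⟩ : ∃ n, N = n + 1 := ⟨N - 1, by omega⟩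
  refine ⟨n, ?_⟩
  calc b ^ (n + 2) = m ^ (n + 1) * b * b ^ (n + 1) := by rw [hfix, ← pow_succ']
    _ = m ^ (n + 1) * b ^ (n + 1 + 1) := by rw [mul_assoc, ← pow_succ']
    _ = b := (hiter _).symm

namespace WithOne

instance {α : Type*} [Finite α] : Finite (WithOne α) := inferInstanceAs (Finite (Option α))

theorem exists_coe_eq_coe_pow_succ {α : Type*} [Semigroup α] (a : α) (n : ℕ) :
    ∃ x : α, (x : WithOne α) = (a : WithOne α) ^ (n + 1) := by
  induction n with
  | zero => exact ⟨a, (pow_one _).symm⟩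
  | succ n ih =>
    obtain ⟨x, hx⟩ := ih
    exact ⟨x * a, by rw [coe_mul, hx, ← pow_succ]⟩

end WithOne

section Green

variable {S : Type*} [Semigroup S] {a b c e x y : S}

theorem leL_iff_exists_withOne : leL a b ↔ ∃ c : WithOne S, (a : WithOne S) = c * b := by
  constructor
  · rintro (rfl | ⟨c, rfl⟩)
    exacts [⟨1, (one_mul _).symm⟩, ⟨c, rfl⟩]
  · rw [WithOne.exists]
    rintro (h | ⟨c, h⟩)
    exacts [Or.inl (WithOne.coe_injective (h.trans (one_mul _))),
      Or.inr ⟨c, WithOne.coe_injective h⟩]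

theorem leR_iff_exists_withOne : leR a b ↔ ∃ c : WithOne S, (a : WithOne S) = b * c := by
  constructor
  · rintro (rfl | ⟨c, rfl⟩)
    exacts [⟨1, (mul_one _).symm⟩, ⟨c, rfl⟩]
  · rw [WithOne.exists]
    rintro (h | ⟨c, h⟩)
    exacts [Or.inl (WithOne.coe_injective (h.trans (mul_one _))),
      Or.inr ⟨c, WithOne.coe_injective h⟩]

theorem leL.trans (hab : leL a b) (hbc : leL b c) : leL a c := by
  obtain ⟨u, hu⟩ := leL_iff_exists_withOne.1 hab
  obtain ⟨v, hv⟩ := leL_iff_exists_withOne.1 hbc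
  exact leL_iff_exists_withOne.2 ⟨u * v, by rw [hu, hv, mul_assoc]⟩

theorem leL.mul_right (h : leL a b) (c : S) : leL (a * c) (b * c) := by
  rcases h with rfl | ⟨u, rfl⟩
  exacts [Or.inl rfl, Or.inr ⟨u, mul_assoc u b c⟩]

theorem leL_mul_left (a b : S) : leL (a * b) b := Or.inr ⟨a, rfl⟩

theorem eqL.symm (h : eqL a b) : eqL b a := ⟨h.2, h.1⟩

theorem eqL.trans (hab : eqL a b) (hbc : eqL b c) : eqL a c :=
  ⟨hab.1.trans hbc.1, hbc.2.trans hab.2⟩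

theorem eqH.refl (a : S) : eqH a a := ⟨⟨Or.inl rfl, Or.inl rfl⟩, Or.inl rfl, Or.inl rfl⟩

theorem IsLClass.mem_iff_eqL {L : Set S} (hL : IsLClass L) (hx : x ∈ L) : y ∈ L ↔ eqL x y := by
  obtain ⟨a, rfl⟩ := hL
  exact ⟨fun hy => (eqL.symm hx).trans hy, fun hxy => eqL.trans hx hxy⟩

theorem exists_eq_mul_of_leL (he : IsIdempotentElem e) (h : leL e x) : ∃ c, e = c * x := by
  rcases h with rfl | h
  exacts [⟨e, he.eq.symm⟩, h]

theorem exists_eq_mul_of_leR (he : IsIdempotentElem e) (h : leR e x) : ∃ c, e = x * c := by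
  rcases h with rfl | h
  exacts [⟨e, he.eq.symm⟩, h]

theorem mul_eq_self_of_eqH (he : IsIdempotentElem e) (hx : eqH e x) : e * x = x ∧ x * e = x := by
  obtain ⟨⟨-, hxe⟩, -, hxe'⟩ := hx
  constructor
  · rcases hxe' with rfl | ⟨c, rfl⟩
    exacts [he.eq, by rw [← mul_assoc, he.eq]]
  · rcases hxe with rfl | ⟨c, rfl⟩
    exacts [he.eq, by rw [mul_assoc, he.eq]]

theorem eqH_of_mul_eq (hex : e * x = x) (hxe : x * e = x) (hxy : x * y = e) (hyx : y * x = e) :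
    eqH e x :=
  ⟨⟨Or.inr ⟨y, hyx.symm⟩, Or.inr ⟨x, hxe.symm⟩⟩, Or.inr ⟨y, hxy.symm⟩, Or.inr ⟨x, hex.symm⟩⟩

theorem exists_inverse_of_eqH (he : IsIdempotentElem e) (hx : eqH e x) :
    ∃ y, eqH e y ∧ x * y = e ∧ y * x = e := by
  obtain ⟨hex, hxe⟩ := mul_eq_self_of_eqH he hx
  obtain ⟨c, hc⟩ := exists_eq_mul_of_leR he hx.2.1
  obtain ⟨d, hd⟩ := exists_eq_mul_of_leL he hx.1.1
  -- `e * c` is a right and `d * e` a left inverse of `x` in the monoid `eSe`, so they agree.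
  have hdc : d * e = e * c :=
    calc d * e = d * (x * c) := by rw [← hc]
      _ = e * c := by rw [← mul_assoc, ← hd]
  have hxy : x * (e * c) = e := by rw [← mul_assoc, hxe, ← hc]
  have hyx : e * c * x = e := by rw [← hdc, mul_assoc, hex, ← hd]
  refine ⟨e * c, eqH_of_mul_eq ?_ ?_ hyx hxy, hxy, hyx⟩
  · rw [← mul_assoc, he.eq]
  · rw [← hdc, mul_assoc, he.eq]

theorem eqH_mul (he : IsIdempotentElem e) (hx : eqH e x) (hy : eqH e y) : eqH e (x * y) := by
  obtain ⟨x', -, hxx', hx'x⟩ := exists_inverse_of_eqH he hx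
  obtain ⟨y', -, hyy', hy'y⟩ := exists_inverse_of_eqH he hy
  obtain ⟨hex, hxe⟩ := mul_eq_self_of_eqH he hx
  obtain ⟨hey, hye⟩ := mul_eq_self_of_eqH he hy
  refine eqH_of_mul_eq (y := y' * x') (by rw [← mul_assoc, hex]) (by rw [mul_assoc, hye]) ?_ ?_
  · calc x * y * (y' * x') = x * (y * y') * x' := by simp only [mul_assoc]
      _ = e := by rw [hyy', hxe, hxx']
  · calc y' * x' * (x * y) = y' * ((x' * x) * y) := by simp only [mul_assoc]
      _ = e := by rw [hx'x, hey, hy'y]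

theorem isGroupHClass_setOf_eqH (he : IsIdempotentElem e) : IsGroupHClass {x | eqH e x} := by
  refine ⟨fun x hx y hy => eqH_mul he hx hy, e, eqH.refl e, he.eq, fun x hx => ?_⟩
  obtain ⟨y, hy, hxy, hyx⟩ := exists_inverse_of_eqH he hx
  exact ⟨(mul_eq_self_of_eqH he hx).1, (mul_eq_self_of_eqH he hx).2, y, hy, hxy, hyx⟩

theorem exists_isIdempotentElem_eqH_of_leL_mul_self [Finite S] (h : leL b (b * b)) :
    ∃ e, IsIdempotentElem e ∧ eqH e b := by
  obtain ⟨m, hm⟩ := leL_iff_exists_withOne.1 h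
  obtain ⟨n, hn⟩ := exists_pow_add_two_eq_of_eq_mul_mul (M := WithOne S) hm
  obtain ⟨e, he⟩ := WithOne.exists_coe_eq_coe_pow_succ b n
  have heb : (e : WithOne S) * b = b := by rw [he, ← pow_succ, hn]
  have hbe : (b : WithOne S) * e = b := by rw [he, ← pow_succ', hn]
  refine ⟨e, WithOne.coe_injective ?_, ⟨?_, ?_⟩, ?_, ?_⟩
  · rw [WithOne.coe_mul]
    nth_rw 2 [he]
    rw [pow_succ', ← mul_assoc, heb, ← pow_succ', he]
  · exact leL_iff_exists_withOne.2 ⟨_, he.trans (pow_succ _ n)⟩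
  · exact leL_iff_exists_withOne.2 ⟨b, hbe.symm⟩
  · exact leR_iff_exists_withOne.2 ⟨_, he.trans (pow_succ' _ n)⟩
  · exact leR_iff_exists_withOne.2 ⟨b, heb.symm⟩

end Green

theorem product_in_Lclass_iff_general {S : Type*} [Semigroup S] [Fintype S]
    (Lc : Set S) (hLc : IsLClass Lc)
    (a b : S) (ha : a ∈ Lc) (hb : b ∈ Lc) :
    a * b ∈ Lc ↔ ∃ H' : Set S, IsHClass H' ∧ H' ⊆ Lc ∧ IsGroupHClass H' ∧ b ∈ H' := by
  have hab : leL a b := ((hLc.mem_iff_eqL ha).1 hb).1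
  rw [hLc.mem_iff_eqL hb]
  constructor
  · intro h
    obtain ⟨e, he, heb⟩ := exists_isIdempotentElem_eqH_of_leL_mul_self (h.1.trans (hab.mul_right b))
    refine ⟨{x | eqH e x}, ⟨e, rfl⟩, fun x hx => ?_, isGroupHClass_setOf_eqH he, heb⟩
    exact (hLc.mem_iff_eqL hb).2 ((eqL.symm heb.1).trans hx.1)
  · rintro ⟨H, -, hHL, ⟨-, e, heH, -, hunit⟩, hbH⟩
    have hea : leL e a := ((hLc.mem_iff_eqL (hHL heH)).1 ha).1
    refine ⟨?_, leL_mul_left a b⟩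
    simpa only [(hunit b hbH).1] using hea.mul_right b

theorem product_in_Lclass_iff {S : Type*} [Semigroup S] [Fintype S]
    (Lc : Set S) (hLc : IsLClass Lc)
    (hgrp : ∃ H : Set S, IsHClass H ∧ H ⊆ Lc ∧ IsGroupHClass H)
    (a b : S) (ha : a ∈ Lc) (hb : b ∈ Lc) :
    a * b ∈ Lc ↔ ∃ H' : Set S, IsHClass H' ∧ H' ⊆ Lc ∧ IsGroupHClass H' ∧ b ∈ H' :=
  product_in_Lclass_iff_general Lc hLc a b ha hb
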